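/- Let ℓ > 0, m ∈ ℕ with m ≥ 2, h = ℓ/m, x_i = ih, and let Φ : [0,ℓ] → ℝ be absolutely continuous with Φ(x) = Φ(0) + ∫_0^x Φ'(y) dy and Φ' ∈ L²(0,ℓ). Define Φ_i = (1/h)∫_{x_i}^{x_{i+1}} Φ(x) dx for i = 0,…,m−1 and Φ_m = Φ(ℓ). Then Σ_{i=0}^{m−1} h ((Φ_{i+1} − Φ_i)/h)² ≤ ∫_0^ℓ Φ'(x)² dx + ∫_{ℓ−h}^{ℓ} Φ'(x)² dx. -/

import Mathlib

/-!
Extend `Φ'` by zero outside `[0, ℓ]`, so that `Φ` is the restriction of a primitive `F` defined on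
all of `ℝ`. Two consecutive Steklov averages differ by the average of `F (x + h) - F x` over a cell
(for the last pair, of `F ℓ - F x` over the last cell). Cauchy–Schwarz, applied once to this average
and once to `F (x + h) - F x = ∫_x^{x+h} Φ'`, bounds `h ((Φ_{i+1} - Φ_i) / h)²` by the cell average
of the window integral `∫_x^{x+h} Φ'²` (for the last pair, by `∫_{ℓ-h}^ℓ Φ'²`). Summed over the
interior cells, the windows cover every point for a total length at most `h`, giving `∫_0^ℓ Φ'²`.
-/

open MeasureTheory intervalIntegral

theorem sq_intervalIntegral_le {f : ℝ → ℝ} {a b : ℝ} (hab : a ≤ b)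
    (hf : IntervalIntegrable f volume a b)
    (hf2 : IntervalIntegrable (fun x => f x ^ 2) volume a b) :
    (∫ x in a..b, f x) ^ 2 ≤ (b - a) * ∫ x in a..b, f x ^ 2 := by
  rcases hab.eq_or_lt with rfl | hlt
  · simp
  set I := ∫ x in a..b, f x
  set c := I / (b - a)
  have hvar : 0 ≤ ∫ x in a..b, (f x - c) ^ 2 := integral_nonneg hab fun _ _ => sq_nonneg _
  have hexpand : ∫ x in a..b, (f x - c) ^ 2 =
      (∫ x in a..b, f x ^ 2) - 2 * c * I + (b - a) * c ^ 2 := by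
    simp_rw [fun x => show (f x - c) ^ 2 = f x ^ 2 - 2 * c * f x + c ^ 2 by ring]
    rw [integral_add (hf2.sub (hf.const_mul _)) intervalIntegrable_const,
      integral_sub hf2 (hf.const_mul _), intervalIntegral.integral_const_mul,
      intervalIntegral.integral_const, smul_eq_mul]
  have hba : 0 < b - a := sub_pos.2 hlt
  rw [hexpand] at hvar
  have hc : (b - a) * c = I := mul_div_cancel₀ I hba.ne'
  nlinarith

noncomputable def steklovAverage (F : ℝ → ℝ) (h a : ℝ) : ℝ :=
  1 / h * ∫ x in a..a + h, F x

theorem mul_sq_steklovAverage_div_le {u v : ℝ → ℝ} {a h : ℝ} (hh : 0 < h)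
    (hu : IntervalIntegrable u volume a (a + h))
    (hu2 : IntervalIntegrable (fun x => u x ^ 2) volume a (a + h))
    (hv : IntervalIntegrable v volume a (a + h))
    (huv : ∀ x ∈ Set.Icc a (a + h), u x ^ 2 ≤ h * v x) :
    h * (steklovAverage u h a / h) ^ 2 ≤ steklovAverage v h a := by
  have hcs := sq_intervalIntegral_le (by linarith) hu hu2
  have hmono : ∫ x in a..a + h, u x ^ 2 ≤ h * ∫ x in a..a + h, v x := by
    rw [← intervalIntegral.integral_const_mul]
    exact integral_mono_on (by linarith) hu2 (hv.const_mul h) huv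
  rw [add_sub_cancel_left] at hcs
  unfold steklovAverage
  calc h * (1 / h * (∫ x in a..a + h, u x) / h) ^ 2 = (∫ x in a..a + h, u x) ^ 2 / h ^ 3 := by
        field_simp
    _ ≤ h ^ 2 * (∫ x in a..a + h, v x) / h ^ 3 := by gcongr; nlinarith
    _ = 1 / h * ∫ x in a..a + h, v x := by field_simp

theorem monotone_intervalIntegral_of_nonneg {w : ℝ → ℝ}
    (hw : ∀ a b, IntervalIntegrable w volume a b) (hw0 : 0 ≤ w) (a : ℝ) :
    Monotone fun x => ∫ y in a..x, w y := fun x y hxy => by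
  dsimp only
  rw [← integral_add_adjacent_intervals (hw a x) (hw x y), le_add_iff_nonneg_right]
  exact integral_nonneg hxy fun t _ => hw0 t

theorem continuous_intervalIntegral_add_right {w : ℝ → ℝ}
    (hw : ∀ a b, IntervalIntegrable w volume a b) (h : ℝ) :
    Continuous fun x => ∫ y in x..x + h, w y := by
  have hP := continuous_primitive hw 0
  refine ((hP.comp (continuous_add_const h)).sub hP).congr fun x => ?_
  exact integral_interval_sub_left (hw 0 _) (hw 0 _)

theorem intervalIntegral_intervalIntegral_add_right_le {w : ℝ → ℝ}
    (hw : ∀ a b, IntervalIntegrable w volume a b) (hw0 : 0 ≤ w) {a b h : ℝ}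
    (hh : 0 ≤ h) :
    ∫ x in a..b, (∫ y in x..x + h, w y) ≤ h * ∫ y in a..b + h, w y := by
  set P := fun x => ∫ y in a..x, w y
  have hPc : Continuous P := continuous_primitive hw a
  have hPm : Monotone P := monotone_intervalIntegral_of_nonneg hw hw0 a
  have hPint : ∀ c d, IntervalIntegrable P volume c d := fun c d => hPc.intervalIntegrable c d
  have hwindow : ∀ x, ∫ y in x..x + h, w y = P (x + h) - P x := fun x =>
    (integral_interval_sub_left (hw a _) (hw a _)).symm
  have hshift : ∫ x in a..b, (P (x + h) - P x) = (∫ x in b..b + h, P x) - ∫ x in a..a + h, P x := by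
    rw [integral_sub (f := fun x => P (x + h))
        ((hPc.comp (continuous_add_const h)).intervalIntegrable a b) (hPint a b),
      integral_comp_add_right P h,
      integral_interval_sub_interval_comm' (hPint _ _) (hPint _ _) (hPint _ _)]
  have hupper : ∫ x in b..b + h, P x ≤ h * P (b + h) := by
    simpa using integral_mono_on (show b ≤ b + h by linarith) (hPint _ _)
      intervalIntegrable_const fun x hx => hPm hx.2
  have hlower : 0 ≤ ∫ x in a..a + h, P x := by
    refine integral_nonneg (by linarith) fun x hx => ?_
    simpa [P] using hPm hx.1
  simp_rw [hwindow, hshift]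
  linarith

section Primitive

variable {g F : ℝ → ℝ} (hg : ∀ a b, IntervalIntegrable g volume a b)
  (hF : ∀ x y, F y - F x = ∫ t in x..y, g t)
include hg hF

theorem continuous_of_sub_eq_intervalIntegral : Continuous F := by
  refine ((continuous_primitive hg 0).const_add (F 0)).congr fun x => ?_
  rw [← hF 0 x, add_sub_cancel]

theorem sq_sub_le_of_sub_eq_intervalIntegral
    (hg2 : ∀ a b, IntervalIntegrable (fun t => g t ^ 2) volume a b) {x y : ℝ} (hxy : x ≤ y) :
    (F y - F x) ^ 2 ≤ (y - x) * ∫ t in x..y, g t ^ 2 := by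
  rw [hF]
  exact sq_intervalIntegral_le hxy (hg x y) (hg2 x y)

variable (hg2 : ∀ a b, IntervalIntegrable (fun t => g t ^ 2) volume a b) {h : ℝ} (hh : 0 < h)
include hg2 hh

theorem mul_sq_steklovAverage_sub_le (a : ℝ) :
    h * ((steklovAverage F h (a + h) - steklovAverage F h a) / h) ^ 2 ≤
      steklovAverage (fun x => ∫ t in x..x + h, g t ^ 2) h a := by
  have hFc := continuous_of_sub_eq_intervalIntegral hg hF
  have hu : Continuous fun x => F (x + h) - F x := (hFc.comp (continuous_add_const h)).sub hFc
  have hdiff : steklovAverage F h (a + h) - steklovAverage F h a =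
      steklovAverage (fun x => F (x + h) - F x) h a := by
    simp only [steklovAverage]
    rw [integral_sub (f := fun x => F (x + h))
        ((hFc.comp (continuous_add_const h)).intervalIntegrable _ _) (hFc.intervalIntegrable _ _),
      integral_comp_add_right F h, mul_sub]
  rw [hdiff]
  refine mul_sq_steklovAverage_div_le hh (hu.intervalIntegrable _ _)
    ((hu.pow 2).intervalIntegrable _ _)
    ((continuous_intervalIntegral_add_right hg2 h).intervalIntegrable _ _) fun x _ => ?_
  simpa using sq_sub_le_of_sub_eq_intervalIntegral hg hF hg2 (le_add_of_nonneg_right hh.le)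

theorem mul_sq_sub_steklovAverage_le (a : ℝ) :
    h * ((F (a + h) - steklovAverage F h a) / h) ^ 2 ≤ ∫ t in a..a + h, g t ^ 2 := by
  have hFc := continuous_of_sub_eq_intervalIntegral hg hF
  have hu : Continuous fun x => F (a + h) - F x := continuous_const.sub hFc
  have hdiff :
      F (a + h) - steklovAverage F h a = steklovAverage (fun x => F (a + h) - F x) h a := by
    simp only [steklovAverage]
    rw [integral_sub intervalIntegrable_const (hFc.intervalIntegrable _ _),
      intervalIntegral.integral_const, smul_eq_mul]
    field_simp
    ring
  have hconst :
      steklovAverage (fun _ => ∫ t in a..a + h, g t ^ 2) h a = ∫ t in a..a + h, g t ^ 2 := by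
    simp only [steklovAverage, intervalIntegral.integral_const, smul_eq_mul]
    field_simp
    ring
  rw [hdiff, ← hconst]
  refine mul_sq_steklovAverage_div_le hh (hu.intervalIntegrable _ _)
    ((hu.pow 2).intervalIntegrable _ _) intervalIntegrable_const fun x hx => ?_
  calc (F (a + h) - F x) ^ 2 ≤ (a + h - x) * ∫ t in x..a + h, g t ^ 2 :=
        sq_sub_le_of_sub_eq_intervalIntegral hg hF hg2 hx.2
    _ ≤ h * ∫ t in a..a + h, g t ^ 2 := by
        have hnonneg : 0 ≤ ∫ t in x..a + h, g t ^ 2 :=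
          integral_nonneg hx.2 fun t _ => sq_nonneg (g t)
        have hsub : ∫ t in x..a + h, g t ^ 2 ≤ ∫ t in a..a + h, g t ^ 2 :=
          integral_mono_interval hx.1 hx.2 le_rfl
            (Filter.Eventually.of_forall fun t => sq_nonneg (g t)) (hg2 _ _)
        exact mul_le_mul (by linarith [hx.1]) hsub hnonneg hh.le

theorem sum_mul_sq_steklovAverage_sub_le {m : ℕ} (hm : 0 < m) (a : ℕ → ℝ)
    (ha : ∀ i < m, a i = steklovAverage F h (i * h)) (ham : a m = F (m * h)) :
    ∑ i ∈ Finset.range m, h * ((a (i + 1) - a i) / h) ^ 2 ≤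
      (∫ t in (0 : ℝ)..m * h, g t ^ 2) + ∫ t in m * h - h..m * h, g t ^ 2 := by
  obtain ⟨n, rfl⟩ : ∃ n, m = n + 1 := ⟨m - 1, by omega⟩
  have hcast : ((n + 1 : ℕ) : ℝ) * h = n * h + h := by push_cast; ring
  rw [Finset.sum_range_succ, hcast, add_sub_cancel_right]
  set W := fun x => ∫ t in x..x + h, g t ^ 2
  have hinterior : ∑ i ∈ Finset.range n, h * ((a (i + 1) - a i) / h) ^ 2 ≤
      ∫ t in (0 : ℝ)..n * h + h, g t ^ 2 := by
    have hadjacent := sum_integral_adjacent_intervals (f := W) (μ := volume)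
      (a := fun k : ℕ => (k : ℝ) * h) (n := n) fun k _ =>
        (continuous_intervalIntegral_add_right hg2 h).intervalIntegrable _ _
    simp only [Nat.cast_succ, add_one_mul, Nat.cast_zero, zero_mul] at hadjacent
    calc ∑ i ∈ Finset.range n, h * ((a (i + 1) - a i) / h) ^ 2
        ≤ ∑ i ∈ Finset.range n, steklovAverage W h (i * h) := by
          refine Finset.sum_le_sum fun i hi => ?_
          have hi : i < n := Finset.mem_range.1 hi
          rw [ha (i + 1) (by omega), ha i (by omega), Nat.cast_succ, add_one_mul]
          exact mul_sq_steklovAverage_sub_le hg hF hg2 hh _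
      _ = 1 / h * ∫ x in (0 : ℝ)..n * h, W x := by
          simp only [steklovAverage, ← Finset.mul_sum, hadjacent]
      _ ≤ 1 / h * (h * ∫ t in (0 : ℝ)..n * h + h, g t ^ 2) := by
          gcongr
          exact intervalIntegral_intervalIntegral_add_right_le hg2 (fun t => sq_nonneg (g t)) hh.le
      _ = ∫ t in (0 : ℝ)..n * h + h, g t ^ 2 := by field_simp
  have hlast : h * ((a (n + 1) - a n) / h) ^ 2 ≤ ∫ t in n * h..n * h + h, g t ^ 2 := by
    rw [ham, ha n (by omega), hcast]
    exact mul_sq_sub_steklovAverage_le hg hF hg2 hh _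
  exact add_le_add hinterior hlast

end Primitive

theorem intervalIntegrable_indicator_Icc {f : ℝ → ℝ} {a b : ℝ} (hf : IntegrableOn f (Set.Icc a b))
    (c d : ℝ) : IntervalIntegrable ((Set.Icc a b).indicator f) volume c d :=
  ((integrable_indicator_iff measurableSet_Icc).2 hf).intervalIntegrable

theorem intervalIntegral_indicator_Icc {f : ℝ → ℝ} {a b c d : ℝ} (hc : c ∈ Set.Icc a b)
    (hd : d ∈ Set.Icc a b) : ∫ x in c..d, (Set.Icc a b).indicator f x = ∫ x in c..d, f x :=
  integral_congr fun _ hx => Set.indicator_of_mem (Set.uIcc_subset_Icc hc hd hx) f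

/-- Bound on the discrete space-difference quotients of the Steklov averages of an
absolutely continuous function `Φ` with square-integrable derivative, where the last
average is replaced by the boundary value `Φ(ℓ)`. -/
theorem steklov_space_difference_bound (ℓ : ℝ) (hℓ : 0 < ℓ) (m : ℕ) (hm : 2 ≤ m)
    (Φ Φ' : ℝ → ℝ)
    (hint : IntegrableOn Φ' (Set.Icc (0 : ℝ) ℓ))
    (hac : ∀ x ∈ Set.Icc (0 : ℝ) ℓ, Φ x = Φ 0 + ∫ y in (0 : ℝ)..x, Φ' y)
    (hL2 : MemLp Φ' 2 (volume.restrict (Set.Ioc (0 : ℝ) ℓ)))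
    (Φd : ℕ → ℝ)
    (hΦd : ∀ i < m,
      Φd i = (1 / (ℓ / m)) * ∫ x in (i : ℝ) * (ℓ / m)..((i : ℝ) + 1) * (ℓ / m), Φ x)
    (hΦm : Φd m = Φ ℓ) :
    ∑ i ∈ Finset.range m, (ℓ / m) * ((Φd (i + 1) - Φd i) / (ℓ / m)) ^ 2
      ≤ (∫ x in (0 : ℝ)..ℓ, (Φ' x) ^ 2) + ∫ x in (ℓ - ℓ / m)..ℓ, (Φ' x) ^ 2 := by
  have hm1 : (1 : ℝ) ≤ m := by exact_mod_cast (by omega : 1 ≤ m)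
  set h := ℓ / m
  have hh : 0 < h := div_pos hℓ (by linarith)
  have hmh : (m : ℝ) * h = ℓ := mul_div_cancel₀ ℓ (by positivity)
  set g := (Set.Icc 0 ℓ).indicator Φ'
  have hsq : (fun t => g t ^ 2) = (Set.Icc 0 ℓ).indicator fun t => Φ' t ^ 2 :=
    (Set.indicator_comp_of_zero (g := fun x : ℝ => x ^ 2) (zero_pow two_ne_zero)).symm
  have hg := intervalIntegrable_indicator_Icc hint
  have hg2 : ∀ a b, IntervalIntegrable (fun t => g t ^ 2) volume a b := by
    rw [hsq]
    exact intervalIntegrable_indicator_Icc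
      ((integrableOn_Icc_iff_integrableOn_Ioc (b := ℓ)).2 hL2.integrable_sq)
  set F := fun x => Φ 0 + ∫ t in (0 : ℝ)..x, g t
  have hF : ∀ x y, F y - F x = ∫ t in x..y, g t := fun x y => by
    rw [add_sub_add_left_eq_sub, integral_interval_sub_left (hg 0 y) (hg 0 x)]
  have hΦF : Set.EqOn Φ F (Set.Icc 0 ℓ) := fun x hx => by
    rw [hac x hx]
    exact congrArg (Φ 0 + ·) (intervalIntegral_indicator_Icc ⟨le_rfl, hℓ.le⟩ hx).symm
  have hsteklov : ∀ i < m, Φd i = steklovAverage F h (i * h) := fun i hi => by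
    have hi' : (i : ℝ) + 1 ≤ m := by exact_mod_cast hi
    have hih : (i : ℝ) * h + h ≤ ℓ := by nlinarith
    rw [hΦd i hi, steklovAverage, add_one_mul]
    exact congrArg _ (integral_congr (hΦF.mono (Set.uIcc_subset_Icc
      ⟨by positivity, by linarith⟩ ⟨by positivity, hih⟩)))
  have hℓh : 0 ≤ ℓ - h := by nlinarith
  have key := sum_mul_sq_steklovAverage_sub_le hg hF hg2 hh (by omega) Φd hsteklov
    (by rw [hΦm, hmh, hΦF ⟨hℓ.le, le_rfl⟩])
  rwa [hmh, hsq, intervalIntegral_indicator_Icc ⟨le_rfl, hℓ.le⟩ ⟨hℓ.le, le_rfl⟩,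
    intervalIntegral_indicator_Icc ⟨hℓh, by linarith⟩ ⟨hℓ.le, le_rfl⟩] at key
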